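/- arXiv:math/0703072 — 2 statements merged into one kernel-verified Lean document; each statement's English description precedes it below -/
import Mathlib

section
/- Let v₁, v₂, v₃, v₄ be points of ℤ^d and say a tuple 𝐯 of points is r-connected if the graph on its index set with an edge between i and j whenever ‖v_i − v_j‖_∞ ≤ r is connected; the gap of 𝐯 is the smallest r such that 𝐯 is r-connected. If 𝐯 = (v₁,v₂,v₃,v₄) has gap r, then there exists a partition of {1,2,3,4} into two nonempty sets J and J^c such that: (i) min{‖v_i − v_j‖_∞ : i ∈ J, j ∈ J^c} = r, and (ii) both (v_i)_{i∈J} and (v_j)_{j∈J^c} are r-connected. -/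
/-!
Among the graphs `F` with `L ≤ F ≤ H`, where `H` joins points at distance `≤ r` and `L` joins
points at distance `< r`, pick a maximal disconnected one (`L` is disconnected because `r` is
the gap, and `H` is connected). Some edge `ab` of `H` joins two components of `F`, and by
maximality `F + ab` is connected, so `F` has exactly the two components of `a` and `b`. Taking
`J` to be the component of `a`: both parts are connected through edges of `F ⊆ H`, no edge of
`L ⊆ F` crosses, so every crossing distance is `≥ r`, and `ab` crosses at distance exactly `r`.
-/

/-- Sup-norm distance between two points of `ℤ^d`. -/
def supDist (d : ℕ) (x y : Fin d → ℤ) : ℕ :=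
  Finset.univ.sup fun i => (x i - y i).natAbs

/-- A tuple `v` is `r`-connected on an index set `s` if the graph on `s` with
an edge between `a` and `b` whenever `‖v a − v b‖_∞ ≤ r` is connected. -/
def TupleConn {d k : ℕ} (v : Fin k → (Fin d → ℤ)) (r : ℕ)
    (s : Finset (Fin k)) : Prop :=
  ∀ i ∈ s, ∀ j ∈ s,
    Relation.ReflTransGen
      (fun a b => a ∈ s ∧ b ∈ s ∧ supDist d (v a) (v b) ≤ r) i j

namespace SimpleGraph

variable {V : Type*}

lemma exists_adj_not_reachable {F H : SimpleGraph V} (hF : ¬F.Preconnected)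
    (hH : H.Preconnected) : ∃ a b, H.Adj a b ∧ ¬F.Reachable a b := by
  obtain ⟨x, y, hxy⟩ : ∃ x y, ¬F.Reachable x y := by simpa [Preconnected] using hF
  obtain ⟨p⟩ := hH x y
  obtain ⟨d, -, hd, hd'⟩ := p.exists_boundary_dart {z | F.Reachable x z} .rfl hxy
  exact ⟨d.fst, d.snd, d.adj, fun h => hd' (hd.trans h)⟩

lemma Reachable.of_sup_edge {F : SimpleGraph V} {a b x : V}
    (h : (F ⊔ edge a b).Reachable a x) : F.Reachable a x ∨ F.Reachable b x := by
  rw [reachable_iff_reflTransGen] at h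
  induction h with
  | refl => exact Or.inl .rfl
  | tail _ hyz ih =>
    rcases (sup_adj ..).1 hyz with hyz | hyz
    · exact ih.imp (·.trans hyz.reachable) (·.trans hyz.reachable)
    · rcases (edge_adj ..).1 hyz with ⟨⟨-, rfl⟩ | ⟨-, rfl⟩, -⟩
      · exact Or.inr .rfl
      · exact Or.inl .rfl

theorem exists_two_components_between [Finite V] {L H : SimpleGraph V} (hLH : L ≤ H)
    (hL : ¬L.Preconnected) (hH : H.Preconnected) :
    ∃ F, L ≤ F ∧ F ≤ H ∧ ∃ a b, H.Adj a b ∧ ¬F.Reachable a b ∧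
      ∀ x, F.Reachable a x ∨ F.Reachable b x := by
  obtain ⟨F, ⟨hLF, hFH, hF⟩, hmax⟩ :=
    (Set.toFinite {F : SimpleGraph V | L ≤ F ∧ F ≤ H ∧ ¬F.Preconnected}).exists_maximal
      ⟨L, le_rfl, hLH, hL⟩
  obtain ⟨a, b, hab, hnab⟩ := exists_adj_not_reachable hF hH
  have hF' : (F ⊔ edge a b).Preconnected := by
    by_contra h
    have hle := hmax ⟨hLF.trans le_sup_left, sup_le hFH ((edge_le_iff _).2 (.inr hab)), h⟩
      le_sup_left
    exact hnab (hle (by simp [edge_adj, hab.ne])).reachable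
  exact ⟨F, hLF, hFH, a, b, hab, hnab, fun x => (hF' a x).of_sup_edge⟩

end SimpleGraph

open SimpleGraph Finset

lemma supDist_comm (d : ℕ) (x y : Fin d → ℤ) : supDist d x y = supDist d y x :=
  Finset.sup_congr rfl fun i _ => by rw [← neg_sub, Int.natAbs_neg]

section CloseGraph

variable {d k : ℕ} (v : Fin k → Fin d → ℤ)

/-- Strict inequality, so that the `r`-graph is `closeGraph v (r + 1)` and `closeGraph v 0 = ⊥`
covers gap `0`. -/
def closeGraph (r : ℕ) : SimpleGraph (Fin k) where
  Adj i j := i ≠ j ∧ supDist d (v i) (v j) < r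
  symm := ⟨fun _ _ h => ⟨h.1.symm, supDist_comm d _ _ ▸ h.2⟩⟩
  loopless := ⟨fun _ h => h.1 rfl⟩

variable {v}

lemma closeGraph_mono {r s : ℕ} (h : r ≤ s) : closeGraph v r ≤ closeGraph v s :=
  fun _ _ hij => ⟨hij.1, hij.2.trans_le h⟩

lemma tupleConn_of_reachable {r : ℕ} {G : SimpleGraph (Fin k)} (hG : G ≤ closeGraph v (r + 1))
    {s : Finset (Fin k)} {c : Fin k} (hs : ∀ x, x ∈ s ↔ G.Reachable c x) : TupleConn v r s := by
  set R := fun a b => a ∈ s ∧ b ∈ s ∧ supDist d (v a) (v b) ≤ r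
  have : Std.Symm R := ⟨fun _ _ h => ⟨h.2.1, h.1, supDist_comm d _ _ ▸ h.2.2⟩⟩
  have from_c : ∀ x ∈ s, Relation.ReflTransGen R c x := by
    intro x hx
    induction (reachable_iff_reflTransGen _ _).1 ((hs x).1 hx) with
    | refl => rfl
    | @tail y z hcy hyz ih =>
      have hcy := (reachable_iff_reflTransGen _ _).2 hcy
      exact (ih ((hs y).2 hcy)).tail
        ⟨(hs y).2 hcy, hx, Nat.lt_succ_iff.1 (hG hyz).2⟩
  exact fun i hi j hj => (symm (from_c i hi)).trans (from_c j hj)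

lemma TupleConn.preconnected_closeGraph {r : ℕ} (h : TupleConn v r univ) :
    (closeGraph v (r + 1)).Preconnected := by
  intro i j
  rw [reachable_iff_reflTransGen]
  refine Relation.reflTransGen_closed (fun a b hab => ?_) _ _ (h i (mem_univ _) j (mem_univ _))
  by_cases hne : a = b
  · exact hne ▸ .refl
  · exact .single ⟨hne, Nat.lt_succ_iff.2 hab.2.2⟩

lemma not_preconnected_closeGraph [Nontrivial (Fin k)] {r : ℕ}
    (hgap : ∀ r' < r, ¬TupleConn v r' univ) : ¬(closeGraph v r).Preconnected := by
  cases r with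
  | zero =>
    have hbot : closeGraph v 0 = ⊥ := by ext; simp [closeGraph]
    obtain ⟨i, j, hij⟩ := exists_pair_ne (Fin k)
    exact fun h => hij (reachable_bot.1 (hbot ▸ h i j))
  | succ r =>
    refine fun h => hgap r r.lt_succ_self fun i _ j _ => ?_
    refine Relation.reflTransGen_closed (fun a b hab => .single ?_) _ _
      ((reachable_iff_reflTransGen _ _).1 (h i j))
    exact ⟨mem_univ _, mem_univ _, Nat.lt_succ_iff.1 hab.2⟩

end CloseGraph

theorem TupleConn.exists_split_of_gap {d k : ℕ} [Nontrivial (Fin k)] {v : Fin k → Fin d → ℤ}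
    {r : ℕ} (hconn : TupleConn v r univ) (hgap : ∀ r' < r, ¬TupleConn v r' univ) :
    ∃ J : Finset (Fin k), J.Nonempty ∧ Jᶜ.Nonempty ∧
      (∀ i ∈ J, ∀ j ∈ Jᶜ, r ≤ supDist d (v i) (v j)) ∧
      (∃ i ∈ J, ∃ j ∈ Jᶜ, supDist d (v i) (v j) = r) ∧
      TupleConn v r J ∧ TupleConn v r Jᶜ := by
  classical
  obtain ⟨F, hLF, hFH, a, b, hab, hnab, hcover⟩ :=
    exists_two_components_between (closeGraph_mono r.le_succ) (not_preconnected_closeGraph hgap)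
      hconn.preconnected_closeGraph
  set J := univ.filter (F.Reachable a ·)
  have mem_J : ∀ x, x ∈ J ↔ F.Reachable a x := by simp [J]
  have mem_Jc : ∀ x, x ∈ Jᶜ ↔ F.Reachable b x := fun x => by
    rw [mem_compl, mem_J]
    exact ⟨(hcover x).resolve_left, fun hbx hax => hnab (hax.trans hbx.symm)⟩
  have cross : ∀ i ∈ J, ∀ j ∈ Jᶜ, r ≤ supDist d (v i) (v j) := fun i hi j hj =>
    not_lt.1 fun hlt => (mem_compl.1 hj) <| (mem_J j).2 <|
      ((mem_J i).1 hi).trans (hLF ⟨by rintro rfl; exact mem_compl.1 hj hi, hlt⟩).reachable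
  have ha : a ∈ J := (mem_J a).2 .rfl
  have hb : b ∈ Jᶜ := (mem_Jc b).2 .rfl
  exact ⟨J, ⟨a, ha⟩, ⟨b, hb⟩, cross,
    ⟨a, ha, b, hb, le_antisymm (Nat.lt_succ_iff.1 hab.2) (cross a ha b hb)⟩,
    tupleConn_of_reachable hFH mem_J, tupleConn_of_reachable hFH mem_Jc⟩

/-- Splitting lemma for a 4-tuple with gap `r`: if `𝐯 = (v₁,v₂,v₃,v₄)` in
`ℤ^d` is `r`-connected but not `r'`-connected for any `r' < r`, then
`{1,2,3,4}` can be partitioned into nonempty sets `J`, `Jᶜ` such that the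
minimum sup-distance between the two groups equals `r` and both groups are
`r`-connected. -/
theorem stmt9 (d : ℕ) (v : Fin 4 → (Fin d → ℤ)) (r : ℕ)
    (hconn : TupleConn v r Finset.univ)
    (hgap : ∀ r' : ℕ, r' < r → ¬ TupleConn v r' Finset.univ) :
    ∃ J : Finset (Fin 4), J.Nonempty ∧ Jᶜ.Nonempty ∧
      (∀ i ∈ J, ∀ j ∈ Jᶜ, r ≤ supDist d (v i) (v j)) ∧
      (∃ i ∈ J, ∃ j ∈ Jᶜ, supDist d (v i) (v j) = r) ∧
      TupleConn v r J ∧ TupleConn v r Jᶜ :=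
  hconn.exists_split_of_gap hgap
end

section
/- Let (Y_v)_{v∈ℤ^d} and, for each n, (Y_v^{(n)})_{v∈ℤ^d} be square-integrable random fields on a common probability space, and let (A_n) be finite subsets of ℤ^d with |A_n| → ∞. Suppose there is K > 0 such that for all n, v, w: |Cov(Y_v^{(n)} − Y_v, Y_w^{(n)})| ≤ K exp(−max(dist(v, A_n^c), |v−w|)/K), and the same bound with the roles of the two fields exchanged. Suppose moreover |A_n \ A_n^r|/|A_n| → 0 for each fixed r, where A_n^r := {v : (v+B_r)∩ℤ^d ⊆ A_n}. Then |A_n|^{-1} Σ_{v∈A_n} Σ_{w∈A_n} |Cov(Y_v^{(n)} − Y_v, Y_w^{(n)})| → 0 as n → ∞. -/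
open MeasureTheory Filter Topology Finset

/-- The covariance `E[(X − EX)(Y − EY)]` of two real random variables. -/
noncomputable def cov17 {Ω : Type*} [MeasurableSpace Ω] (P : Measure Ω)
    (X Y : Ω → ℝ) : ℝ :=
  ∫ ω, (X ω - ∫ ω', X ω' ∂P) * (Y ω - ∫ ω', Y ω' ∂P) ∂P

/-- Euclidean norm of a point of `ℤ^d`. -/
noncomputable def enorm17 {d : ℕ} (v : Fin d → ℤ) : ℝ :=
  Real.sqrt (∑ i, ((v i : ℝ)) ^ 2)

/-!
The decay bound dominates each entry by `f (v - w)` with `f z = K exp(-|z|/K)` summable over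
`ℤ^d`, so every row sum over `w` is at most `∑ f`. If `v` is at distance at least `r` from `A_nᶜ`,
each entry of its row is moreover at most `K exp(-r/K)`; splitting the row into a fixed finite
window of offsets `v - w` and the tail of `f` outside it makes such rows uniformly small once `r`
is large. The remaining rows are a vanishing fraction of `A_n` and each contributes at most `∑ f`.
-/

section RowSums

variable {V : Type*} [AddGroup V] [DecidableEq V] {f : V → ℝ}

lemma sum_filter_sub_notMem_le_tsum_sub_sum (hf0 : ∀ z, 0 ≤ f z) (hf : Summable f)
    (s B : Finset V) (v : V) :
    ∑ w ∈ B with v - w ∉ s, f (v - w) ≤ ∑' z, f z - ∑ z ∈ s, f z := by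
  set T := (B.filter fun w => v - w ∉ s).image (v - ·)
  have hdisj : Disjoint T s := by
    simp only [T, disjoint_left, mem_image, mem_filter]
    rintro _ ⟨w, ⟨-, hw⟩, rfl⟩
    exact hw
  have hT : ∑ w ∈ B with v - w ∉ s, f (v - w) = ∑ z ∈ T, f z :=
    (sum_image fun _ _ _ _ h => sub_right_injective h).symm
  have := hf.sum_le_tsum (T ∪ s) (fun z _ => hf0 z)
  rw [sum_union hdisj] at this
  linarith

lemma sum_comp_sub_le_tsum (hf0 : ∀ z, 0 ≤ f z) (hf : Summable f) (B : Finset V) (v : V) :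
    ∑ w ∈ B, f (v - w) ≤ ∑' z, f z := by
  simpa using sum_filter_sub_notMem_le_tsum_sub_sum hf0 hf ∅ B v

lemma sum_le_card_mul_add_tsum_sub_sum (hf0 : ∀ z, 0 ≤ f z) (hf : Summable f)
    {a : V → ℝ} {v : V} {c : ℝ} (hc : 0 ≤ c) (haf : ∀ w, a w ≤ f (v - w)) (hac : ∀ w, a w ≤ c)
    (s B : Finset V) :
    ∑ w ∈ B, a w ≤ #s * c + (∑' z, f z - ∑ z ∈ s, f z) := by
  rw [← sum_filter_add_sum_filter_not B (fun w => v - w ∈ s)]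
  have hwindow : #{w ∈ B | v - w ∈ s} ≤ #s :=
    card_le_card_of_injOn (v - ·) (fun w hw => (mem_filter.mp hw).2)
      fun _ _ _ _ h => sub_right_injective h
  gcongr
  · calc ∑ w ∈ B with v - w ∈ s, a w ≤ #{w ∈ B | v - w ∈ s} * c :=
          (sum_le_card_nsmul _ _ _ fun w _ => hac w).trans_eq (nsmul_eq_mul _ _)
      _ ≤ #s * c := by gcongr
  · exact (sum_le_sum fun w _ => haf w).trans (sum_filter_sub_notMem_le_tsum_sub_sum hf0 hf s B v)

end RowSums

lemma sum_le_card_mul_add_card_filter_not_mul {α : Type*} (A : Finset α) (p : α → Prop)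
    [DecidablePred p] {F : α → ℝ} {η C : ℝ} (hη : 0 ≤ η) (hgood : ∀ v ∈ A, p v → F v ≤ η)
    (hall : ∀ v ∈ A, F v ≤ C) :
    ∑ v ∈ A, F v ≤ #A * η + #{v ∈ A | ¬ p v} * C := by
  rw [← sum_filter_add_sum_filter_not A p]
  gcongr
  · calc ∑ v ∈ A with p v, F v ≤ #{v ∈ A | p v} * η := (sum_le_card_nsmul _ _ _ fun v hv =>
            hgood v (mem_filter.mp hv).1 (mem_filter.mp hv).2).trans_eq (nsmul_eq_mul _ _)
      _ ≤ #A * η := by gcongr; exact filter_subset _ _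
  · exact (sum_le_card_nsmul _ _ _ fun v hv => hall v (mem_filter.mp hv).1).trans_eq
      (nsmul_eq_mul _ _)

open Classical in
theorem tendsto_sum_sum_div_card_of_summable {V : Type*} [AddGroup V] {f : V → ℝ}
    {a : ℕ → V → V → ℝ} {A : ℕ → Finset V} {I : ℝ → ℕ → V → Prop}
    (hf0 : ∀ z, 0 ≤ f z) (hf : Summable f) (ha0 : ∀ n v w, 0 ≤ a n v w)
    (haf : ∀ n v w, a n v w ≤ f (v - w))
    (haI : ∀ η > 0, ∀ᶠ r in atTop, ∀ n v w, I r n v → a n v w ≤ η)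
    (hI : ∀ᶠ r in atTop,
      Tendsto (fun n => (#{v ∈ A n | ¬ I r n v} : ℝ) / #(A n)) atTop (𝓝 0)) :
    Tendsto (fun n => (∑ v ∈ A n, ∑ w ∈ A n, a n v w) / #(A n)) atTop (𝓝 0) := by
  have hnonneg (n : ℕ) : 0 ≤ (∑ v ∈ A n, ∑ w ∈ A n, a n v w) / #(A n) :=
    div_nonneg (sum_nonneg fun v _ => sum_nonneg fun w _ => ha0 n v w) (Nat.cast_nonneg _)
  refine tendsto_order.2 ⟨fun b hb => Eventually.of_forall fun n => hb.trans_le (hnonneg n),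
    fun ε hε => ?_⟩
  set C := ∑' z, f z
  have hC : 0 ≤ C := tsum_nonneg hf0
  obtain ⟨s, hs⟩ :=
    (hf.hasSum.eventually_const_lt (sub_lt_self C (by positivity : 0 < ε / 4))).exists
  obtain ⟨r, hrη, hrI⟩ := ((haI (ε / (4 * (#s + 1))) (by positivity)).and hI).exists
  filter_upwards [hrI.eventually_lt_const (by positivity : 0 < ε / (2 * (C + 1)))] with n hn
  have hgood : ∀ v ∈ A n, I r n v → ∑ w ∈ A n, a n v w ≤ ε / 2 := fun v _ hv => by
    refine (sum_le_card_mul_add_tsum_sub_sum hf0 hf (by positivity) (haf n v)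
      (fun w => hrη n v w hv) s (A n)).trans ?_
    have : (#s : ℝ) * (ε / (4 * (#s + 1))) ≤ ε / 4 := by
      rw [mul_div_assoc', div_le_div_iff₀ (by positivity) (by positivity)]
      nlinarith
    linarith
  have hrow : ∀ v ∈ A n, ∑ w ∈ A n, a n v w ≤ C := fun v _ =>
    (sum_le_sum fun w _ => haf n v w).trans (sum_comp_sub_le_tsum hf0 hf (A n) v)
  have hsum := sum_le_card_mul_add_card_filter_not_mul (A n) (I r n) (by positivity) hgood hrow
  rcases (A n).eq_empty_or_nonempty with hA | hA
  · simpa [hA] using hε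
  have hcard : (0 : ℝ) < #(A n) := by exact_mod_cast hA.card_pos
  calc (∑ v ∈ A n, ∑ w ∈ A n, a n v w) / #(A n)
      ≤ ε / 2 + (#{v ∈ A n | ¬ I r n v} : ℝ) / #(A n) * C := by
        rw [div_le_iff₀ hcard]
        refine hsum.trans_eq ?_
        field_simp
    _ ≤ ε / 2 + ε / (2 * (C + 1)) * C := by gcongr
    _ < ε := by
        have : ε / (2 * (C + 1)) * C < ε / 2 := by
          rw [div_mul_eq_mul_div, div_lt_div_iff₀ (by positivity) two_pos]
          nlinarith
        linarith

lemma summable_exp_neg_abs_int_div {c : ℝ} (hc : 0 < c) :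
    Summable fun m : ℤ => Real.exp (-|(m : ℝ)| / c) := by
  have hnat : Summable fun n : ℕ => Real.exp (-(n : ℝ) / c) := by
    refine (Real.summable_exp_nat_mul_iff.mpr (neg_lt_zero.mpr (inv_pos.mpr hc))).congr
      fun n => ?_
    ring_nf
  refine Summable.of_nat_of_neg (hnat.congr fun n => ?_) (hnat.congr fun n => ?_) <;> simp

lemma summable_prod_apply_of_nonneg {ι β : Type*} [Fintype ι] [DecidableEq ι] [DecidableEq β]
    {g : β → ℝ} (hg0 : ∀ b, 0 ≤ g b) (hg : Summable g) :
    Summable fun z : ι → β => ∏ i, g (z i) := by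
  refine summable_of_sum_le (c := ∏ _i : ι, ∑' b, g b)
    (fun z => prod_nonneg fun i _ => hg0 _) fun S => ?_
  calc ∑ z ∈ S, ∏ i, g (z i)
      ≤ ∑ z ∈ Fintype.piFinset fun i => S.image (· i), ∏ i, g (z i) :=
        sum_le_sum_of_subset_of_nonneg
          (fun z hz => Fintype.mem_piFinset.mpr fun i => mem_image_of_mem _ hz)
          fun z _ _ => prod_nonneg fun i _ => hg0 _
    _ = ∏ i, ∑ b ∈ S.image (· i), g b := (prod_univ_sum _ _).symm
    _ ≤ ∏ _i : ι, ∑' b, g b :=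
        prod_le_prod (fun i _ => sum_nonneg fun b _ => hg0 b)
          fun i _ => hg.sum_le_tsum _ fun b _ => hg0 b

lemma enorm17_neg {d : ℕ} (v : Fin d → ℤ) : enorm17 (-v) = enorm17 v := by
  simp [enorm17]

lemma abs_apply_le_enorm17 {d : ℕ} (v : Fin d → ℤ) (i : Fin d) : |(v i : ℝ)| ≤ enorm17 v := by
  rw [← Real.sqrt_sq_eq_abs]
  exact Real.sqrt_le_sqrt (single_le_sum (f := fun j => (v j : ℝ) ^ 2)
    (fun j _ => sq_nonneg _) (mem_univ i))

lemma summable_exp_neg_enorm17_div {d : ℕ} {K : ℝ} (hK : 0 < K) :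
    Summable fun z : Fin d → ℤ => Real.exp (-enorm17 z / K) := by
  rcases Nat.eq_zero_or_pos d with rfl | hd
  · exact Summable.of_finite
  have hdK : (0 : ℝ) < d * K := by positivity
  refine Summable.of_nonneg_of_le (fun _ => (Real.exp_pos _).le) (fun z => ?_)
    (summable_prod_apply_of_nonneg (fun _ => (Real.exp_pos _).le)
      (summable_exp_neg_abs_int_div hdK))
  have hsum_abs : ∑ i, |(z i : ℝ)| ≤ d * enorm17 z := by
    simpa using sum_le_sum fun i (_ : i ∈ univ) => abs_apply_le_enorm17 z i
  rw [← Real.exp_sum, Real.exp_le_exp, ← sum_div, sum_neg_distrib,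
    div_le_div_iff₀ hK hdK]
  nlinarith

lemma le_sInf_enorm17_sub_of_forall_add_mem {d : ℕ} {A : Set (Fin d → ℤ)} {v : Fin d → ℤ}
    {r : ℝ} (hA : {u | u ∉ A}.Nonempty) (hv : ∀ z, enorm17 z ≤ r → v + z ∈ A) :
    r ≤ sInf ((fun u => enorm17 (v - u)) '' {u | u ∉ A}) := by
  refine le_csInf (hA.image _) ?_
  rintro _ ⟨u, hu, rfl⟩
  by_contra! hlt
  have := hv (u - v) (by rw [← neg_sub, enorm17_neg]; exact hlt.le)
  exact hu (by simpa using this)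

theorem stmt17_general {Ω : Type*} [MeasurableSpace Ω] (P : Measure Ω)
    (d : ℕ) (hd : 1 ≤ d)
    (Y : (Fin d → ℤ) → Ω → ℝ) (Yn : ℕ → (Fin d → ℤ) → Ω → ℝ)
    (A : ℕ → Finset (Fin d → ℤ))
    (K : ℝ) (hK : 0 < K)
    (hcov1 : ∀ n : ℕ, ∀ v w : Fin d → ℤ,
      |cov17 P (Yn n v - Y v) (Yn n w)| ≤
        K * Real.exp (-(max
            (sInf ((fun u => enorm17 (v - u)) '' {u | u ∉ A n}))
            (enorm17 (v - w))) / K))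
    (hint : ∀ r : ℝ, 0 < r →
      Tendsto (fun n =>
          ((Set.ncard {v : Fin d → ℤ | v ∈ A n ∧
              ¬ ∀ z : Fin d → ℤ, enorm17 z ≤ r → v + z ∈ A n} : ℝ)
            / (A n).card)) atTop (𝓝 0)) :
    Tendsto (fun n =>
        (∑ v ∈ A n, ∑ w ∈ A n, |cov17 P (Yn n v - Y v) (Yn n w)|)
          / (A n).card) atTop (𝓝 0) := by
  classical
  have : Nonempty (Fin d) := Fin.pos_iff_nonempty.mp hd
  have hcompl (n : ℕ) : {u | u ∉ A n}.Nonempty := Infinite.exists_notMem_finset (A n)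
  have hdecay : Tendsto (fun r => K * Real.exp (-r / K)) atTop (𝓝 0) := by
    simpa [neg_div] using
      (Real.tendsto_exp_neg_atTop_nhds_zero.comp (tendsto_id.atTop_div_const hK)).const_mul K
  refine tendsto_sum_sum_div_card_of_summable (f := fun z => K * Real.exp (-enorm17 z / K))
    (I := fun r n v => ∀ z, enorm17 z ≤ r → v + z ∈ A n) (fun _ => by positivity)
    ((summable_exp_neg_enorm17_div hK).mul_left K) (fun _ _ _ => abs_nonneg _)
    (fun n v w => (hcov1 n v w).trans ?_) (fun η hη => ?_) ?_
  · gcongr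
    exact le_max_right _ _
  · filter_upwards [hdecay.eventually_le_const hη] with r hr n v w hv
    refine (hcov1 n v w).trans (le_trans ?_ hr)
    gcongr
    exact (le_sInf_enorm17_sub_of_forall_add_mem (hcompl n) hv).trans (le_max_left _ _)
  · filter_upwards [eventually_gt_atTop 0] with r hr
    simpa [← Set.ncard_coe_finset, coe_filter] using hint r hr

/-- Approximation step of Lemma 7.3: if the covariances of the differences of
the finite-volume and infinite-volume fields decay like
`K exp(−max(dist(v, A_nᶜ), |v−w|)/K)` (and symmetrically), `|A_n| → ∞`, and
the interior proportion `|A_n^r|/|A_n| → 1` for each `r`, then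
`|A_n|⁻¹ ∑_{v,w ∈ A_n} |Cov(Y_v^{(n)} − Y_v, Y_w^{(n)})| → 0`. -/
theorem stmt17 {Ω : Type*} [MeasurableSpace Ω] (P : Measure Ω)
    [IsProbabilityMeasure P] (d : ℕ) (hd : 1 ≤ d)
    (Y : (Fin d → ℤ) → Ω → ℝ) (Yn : ℕ → (Fin d → ℤ) → Ω → ℝ)
    (hY : ∀ v, MemLp (Y v) 2 P) (hYn : ∀ n v, MemLp (Yn n v) 2 P)
    (A : ℕ → Finset (Fin d → ℤ))
    (hA : Tendsto (fun n => (A n).card) atTop atTop)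
    (K : ℝ) (hK : 0 < K)
    (hcov1 : ∀ n : ℕ, ∀ v w : Fin d → ℤ,
      |cov17 P (Yn n v - Y v) (Yn n w)| ≤
        K * Real.exp (-(max
            (sInf ((fun u => enorm17 (v - u)) '' {u | u ∉ A n}))
            (enorm17 (v - w))) / K))
    (hcov2 : ∀ n : ℕ, ∀ v w : Fin d → ℤ,
      |cov17 P (Y v) (Yn n w - Y w)| ≤
        K * Real.exp (-(max
            (sInf ((fun u => enorm17 (w - u)) '' {u | u ∉ A n}))
            (enorm17 (v - w))) / K))
    (hint : ∀ r : ℝ, 0 < r →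
      Tendsto (fun n =>
          ((Set.ncard {v : Fin d → ℤ | v ∈ A n ∧
              ¬ ∀ z : Fin d → ℤ, enorm17 z ≤ r → v + z ∈ A n} : ℝ)
            / (A n).card)) atTop (𝓝 0)) :
    Tendsto (fun n =>
        (∑ v ∈ A n, ∑ w ∈ A n, |cov17 P (Yn n v - Y v) (Yn n w)|)
          / (A n).card) atTop (𝓝 0) :=
  stmt17_general P d hd Y Yn A K hK hcov1 hint
end
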